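/- Let A be a C*-algebra, r ≥ 2, and let e₁, …, e_r ∈ A be mutually orthogonal tripotents (e_i e_i* e_i = e_i and e_i □ e_j = 0 for i ≠ j). Let 2 ≤ m ≤ r. Then, as bounded linear maps on A, ∏_{i=1}^{m−1} P₀(e_i) = ∏_{i=1}^{r} P₀(e_i) + Σ_{k=m}^{r} ( P₁(e_k) ∘ ∏_{i ∈ {1,…,r}, i ≠ k} P₀(e_i) ) + Σ_{m ≤ i < k ≤ r} P₁(e_i) ∘ P₁(e_k) + Σ_{i=m}^{r} P₂(e_i), where each product of projections is taken in increasing order of index (the Peirce projections of mutually orthogonal tripotents commute, so the order is immaterial). -/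

import Mathlib

/-- The box operator `e □ e` of a C*-algebra (as a JB*-triple):
`x ↦ {e,e,x} = (e e* x + x e* e)/2`. -/
noncomputable def boxSelf {A : Type*} [NonUnitalCStarAlgebra A] (e x : A) : A :=
  (2 : ℂ)⁻¹ • (e * star e * x + x * star e * e)

/-- The Peirce 2-projection `P₂(e) = 2(e□e)² − e□e`. -/
noncomputable def P2 {A : Type*} [NonUnitalCStarAlgebra A] (e x : A) : A :=
  (2 : ℂ) • boxSelf e (boxSelf e x) - boxSelf e x

/-- The Peirce 1-projection `P₁(e) = 4(e□e − (e□e)²)`. -/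
noncomputable def P1 {A : Type*} [NonUnitalCStarAlgebra A] (e x : A) : A :=
  (4 : ℂ) • (boxSelf e x - boxSelf e (boxSelf e x))

/-- The Peirce 0-projection `P₀(e) : x ↦ x − e e* x − x e* e + e e* x e* e`. -/
def P0 {A : Type*} [NonUnitalCStarAlgebra A] (e x : A) : A :=
  x - e * star e * x - x * star e * e + e * star e * x * star e * e

/-- Composition, in the order listed, of the maps `f i` for `i` running through a list `l`,
applied to `x`; for an increasing list this is the product taken in increasing index order. -/
def compList {A : Type*} (f : ℕ → A → A) (l : List ℕ) (x : A) : A :=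
  l.foldr (fun i y => f i y) x

/-! For a tripotent `e` write `u = e e*` (`rangeProj e`) and `v = e* e` (`sourceProj e`);
these are projections, and `P₂(e) x = u x v`, `P₁(e) x = u x + x v - 2 u x v`,
`P₀(e) x = (1 - u) x (1 - v)` (formally, since `A` need not be unital). In a C*-algebra
`e □ c = 0` amounts to `e* c = 0 = e c*`, so the `u_i` are mutually orthogonal, as are the `v_i`.
Hence `∏_{i ∈ S} P₀(e_i) x = (1 - p_S) x (1 - q_S)` with `p_S = ∑_{i ∈ S} u_i`,
`q_S = ∑_{i ∈ S} v_i`, and every term of the identity becomes a noncommutative polynomial in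
`p_S, q_S, p_T, q_T` (`S = {1, …, m-1}`, `T = {m, …, r}`) with `x` in the middle; the identity
is then a ring identity. -/

open Finset

def StarOrthogonal {A : Type*} [Mul A] [Star A] [Zero A] (a b : A) : Prop :=
  star a * b = 0 ∧ a * star b = 0

def rangeProj {A : Type*} [Mul A] [Star A] (e : A) : A := e * star e

def sourceProj {A : Type*} [Mul A] [Star A] (e : A) : A := star e * e

theorem compList_cons {A : Type*} (f : ℕ → A → A) (i : ℕ) (l : List ℕ) (x : A) :
    compList f (i :: l) x = f i (compList f l x) := rfl

theorem sum_sum_lt_add_sum_diag {ι M : Type*} [LinearOrder ι] [AddCommMonoid M]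
    (s : Finset ι) (f : ι → ι → M) :
    ∑ i ∈ s, ∑ j ∈ s with i < j, (f i j + f j i) + ∑ i ∈ s, f i i = ∑ i ∈ s, ∑ j ∈ s, f i j := by
  induction s using Finset.induction_on_max with
  | empty => simp
  | insert a s ha ih =>
    have has : a ∉ s := fun h => lt_irrefl a (ha a h)
    have h_lt : ∀ i ∈ s, (insert a s).filter (i < ·) = insert a (s.filter (i < ·)) :=
      fun i hi => by rw [filter_insert, if_pos (ha i hi)]
    have h_top : (insert a s).filter (a < ·) = ∅ :=
      filter_eq_empty_iff.mpr fun j hj => by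
        rcases mem_insert.mp hj with rfl | hj
        exacts [lt_irrefl j, (ha j hj).not_gt]
    rw [sum_insert has, h_top, sum_empty, zero_add,
      sum_congr rfl fun i hi => by rw [h_lt i hi, sum_insert (by simp [has])]]
    simp only [sum_insert has, sum_add_distrib, ← ih]
    abel

section Ring

variable {A : Type*} [NonUnitalRing A] [Star A]

theorem rangeProj_mul_self {e : A} (he : e * star e * e = e) :
    rangeProj e * rangeProj e = rangeProj e := by
  rw [rangeProj, ← mul_assoc, he]

theorem sourceProj_mul_self {e : A} (he : e * star e * e = e) :
    sourceProj e * sourceProj e = sourceProj e := by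
  rw [sourceProj, mul_assoc, ← mul_assoc e, he]

theorem StarOrthogonal.rangeProj_mul {e c : A} (h : StarOrthogonal e c) :
    rangeProj e * rangeProj c = 0 := by
  rw [rangeProj, rangeProj, mul_assoc, ← mul_assoc (star e), h.1, zero_mul, mul_zero]

theorem StarOrthogonal.sourceProj_mul {e c : A} (h : StarOrthogonal e c) :
    sourceProj e * sourceProj c = 0 := by
  rw [sourceProj, sourceProj, mul_assoc, ← mul_assoc e, h.2, zero_mul, mul_zero]

theorem rangeProj_mul_sum_rangeProj_eq_zero {e : ℕ → A} {s : Set ℕ}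
    (horth : s.Pairwise fun i j => StarOrthogonal (e i) (e j)) {k : ℕ} {S : Finset ℕ}
    (hk : k ∈ s) (hS : ↑S ⊆ s) (hkS : k ∉ S) :
    rangeProj (e k) * ∑ i ∈ S, rangeProj (e i) = 0 := by
  rw [mul_sum]
  exact sum_eq_zero fun i hi => (horth hk (hS hi) (ne_of_mem_of_not_mem hi hkS).symm).rangeProj_mul

theorem sum_sourceProj_mul_sourceProj_eq_zero {e : ℕ → A} {s : Set ℕ}
    (horth : s.Pairwise fun i j => StarOrthogonal (e i) (e j)) {k : ℕ} {S : Finset ℕ}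
    (hk : k ∈ s) (hS : ↑S ⊆ s) (hkS : k ∉ S) :
    (∑ i ∈ S, sourceProj (e i)) * sourceProj (e k) = 0 := by
  rw [sum_mul]
  exact sum_eq_zero fun i hi => (horth (hS hi) hk (ne_of_mem_of_not_mem hi hkS)).sourceProj_mul

end Ring

section Tripotent

variable {A : Type*} [NonUnitalCStarAlgebra A] {e c : A}

theorem boxSelf_eq (e y : A) :
    boxSelf e y = (2 : ℂ)⁻¹ • (rangeProj e * y + y * sourceProj e) := by
  rw [boxSelf, mul_assoc y]; rfl

theorem P0_eq (e x : A) :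
    P0 e x = x - rangeProj e * x - x * sourceProj e + rangeProj e * x * sourceProj e := by
  simp only [P0, rangeProj, sourceProj, mul_assoc]

theorem P1_eq_of_tripotent (he : e * star e * e = e) (x : A) :
    P1 e x = rangeProj e * x + x * sourceProj e - 2 • (rangeProj e * x * sourceProj e) := by
  have hu := rangeProj_mul_self he
  have hv : ∀ z, z * sourceProj e * sourceProj e = z * sourceProj e := fun z => by
    rw [mul_assoc, sourceProj_mul_self he]
  simp only [P1, boxSelf_eq, smul_add, mul_add, add_mul, smul_mul_assoc, mul_smul_comm,
    ← mul_assoc, hu, hv]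
  module

theorem P2_eq_of_tripotent (he : e * star e * e = e) (x : A) :
    P2 e x = rangeProj e * x * sourceProj e := by
  have hu := rangeProj_mul_self he
  have hv : ∀ z, z * sourceProj e * sourceProj e = z * sourceProj e := fun z => by
    rw [mul_assoc, sourceProj_mul_self he]
  simp only [P2, boxSelf_eq, smul_add, mul_add, add_mul, smul_mul_assoc, mul_smul_comm,
    ← mul_assoc, hu, hv]
  module

theorem starOrthogonal_of_box_eq_zero (he : e * star e * e = e)
    (h : ∀ x, c * star e * x + x * star e * c = 0) : StarOrthogonal e c := by
  have hu := rangeProj_mul_self he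
  have hv := sourceProj_mul_self he
  have hx : c * sourceProj e + rangeProj e * c = 0 := by
    simpa only [rangeProj, sourceProj, mul_assoc] using h e
  have hL : rangeProj e * c * sourceProj e + rangeProj e * c = 0 := by
    simpa only [mul_add, mul_zero, ← mul_assoc, hu] using congrArg (rangeProj e * ·) hx
  have hR : c * sourceProj e + rangeProj e * c * sourceProj e = 0 := by
    simpa only [add_mul, zero_mul, mul_assoc c, hv] using congrArg (· * sourceProj e) hx
  have hcomm : rangeProj e * c = c * sourceProj e :=
    (eq_neg_of_add_eq_zero_right hL).trans (eq_neg_of_add_eq_zero_left hR).symm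
  have hw : rangeProj e * c = 0 := by
    have h2 : (2 : ℂ) • (rangeProj e * c) = 0 := by
      rw [two_smul]; nth_rw 1 [hcomm]; exact hx
    exact (smul_eq_zero.mp h2).resolve_left two_ne_zero
  have he' : star e * rangeProj e = star e := by
    simpa [rangeProj, star_mul, mul_assoc] using congrArg star he
  have hse : sourceProj e * star e = star e := by
    rw [sourceProj, mul_assoc]; exact he'
  refine ⟨by rw [← he', mul_assoc, hw, mul_zero], ?_⟩
  have hc : c * star e = 0 := by
    rw [← hse, ← mul_assoc, ← hcomm, hw, zero_mul]
  rw [← star_star e, ← star_mul, hc, star_zero]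

end Tripotent

section Family

variable {A : Type*} [NonUnitalCStarAlgebra A] {e : ℕ → A} {s : Set ℕ}
  (horth : s.Pairwise fun i j => StarOrthogonal (e i) (e j))
include horth

theorem compList_P0_eq {l : List ℕ} (hl : l.Nodup) (hls : ∀ i ∈ l, i ∈ s) (x : A) :
    compList (fun i => P0 (e i)) l x
      = x - (∑ i ∈ l.toFinset, rangeProj (e i)) * x - x * ∑ i ∈ l.toFinset, sourceProj (e i)
        + (∑ i ∈ l.toFinset, rangeProj (e i)) * x * ∑ i ∈ l.toFinset, sourceProj (e i) := by
  induction l with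
  | nil => simp [compList]
  | cons c t ih =>
    obtain ⟨hct, ht⟩ := List.nodup_cons.mp hl
    have hc := hls c List.mem_cons_self
    have hts : ↑t.toFinset ⊆ s := fun i hi => hls i (List.mem_cons_of_mem c (by simpa using hi))
    have hct' : c ∉ t.toFinset := by simpa using hct
    have hup := rangeProj_mul_sum_rangeProj_eq_zero horth hc hts hct'
    have hqv : ∀ z, z * (∑ i ∈ t.toFinset, sourceProj (e i)) * sourceProj (e c) = 0 := fun z => by
      rw [mul_assoc, sum_sourceProj_mul_sourceProj_eq_zero horth hc hts hct', mul_zero]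
    rw [compList_cons, ih ht fun i hi => hls i (List.mem_cons_of_mem c hi), P0_eq,
      List.toFinset_cons, sum_insert hct', sum_insert hct']
    simp only [mul_add, add_mul, mul_sub, sub_mul, ← mul_assoc, hup, hqv, zero_mul]
    abel

variable (htri : ∀ i ∈ s, e i * star (e i) * e i = e i)
include htri

theorem P1_compList_P0_of_notMem {l : List ℕ} {k : ℕ} (hl : l.Nodup) (hls : ∀ i ∈ l, i ∈ s)
    (hk : k ∈ s) (hkl : k ∉ l) (x : A) :
    P1 (e k) (compList (fun i => P0 (e i)) l x)
      = P1 (e k) x - rangeProj (e k) * x * ∑ i ∈ l.toFinset, sourceProj (e i)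
        - (∑ i ∈ l.toFinset, rangeProj (e i)) * x * sourceProj (e k) := by
  have hls' : ↑l.toFinset ⊆ s := fun i hi => hls i (by simpa using hi)
  have hkl' : k ∉ l.toFinset := by simpa using hkl
  have hup := rangeProj_mul_sum_rangeProj_eq_zero horth hk hls' hkl'
  have hqv : ∀ z, z * (∑ i ∈ l.toFinset, sourceProj (e i)) * sourceProj (e k) = 0 := fun z => by
    rw [mul_assoc, sum_sourceProj_mul_sourceProj_eq_zero horth hk hls' hkl', mul_zero]
  rw [compList_P0_eq horth hl hls, P1_eq_of_tripotent (htri k hk), P1_eq_of_tripotent (htri k hk)]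
  simp only [mul_add, add_mul, mul_sub, sub_mul, ← mul_assoc, hup, hqv, zero_mul, smul_sub,
    smul_add]
  abel

theorem P1_compList_P0_filter_ne {l : List ℕ} {k : ℕ} (hl : l.Nodup) (hls : ∀ i ∈ l, i ∈ s)
    (hkl : k ∈ l) (x : A) :
    P1 (e k) (compList (fun i => P0 (e i)) (l.filter (· ≠ k)) x)
      = rangeProj (e k) * x + x * sourceProj (e k)
        - rangeProj (e k) * x * ∑ i ∈ l.toFinset, sourceProj (e i)
        - (∑ i ∈ l.toFinset, rangeProj (e i)) * x * sourceProj (e k) := by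
  have hf : (l.filter (· ≠ k)).toFinset = l.toFinset.erase k := by
    rw [List.toFinset_filter]; simp [filter_ne']
  rw [P1_compList_P0_of_notMem horth htri (hl.filter _)
      (fun i hi => hls i (List.mem_of_mem_filter hi)) (hls k hkl) (by simp), hf,
    sum_erase_eq_sub (List.mem_toFinset.mpr hkl), sum_erase_eq_sub (List.mem_toFinset.mpr hkl),
    P1_eq_of_tripotent (htri k (hls k hkl))]
  simp only [mul_sub, sub_mul]
  abel

theorem sum_P1_compList_P0_filter_ne {l : List ℕ} {T : Finset ℕ} (hl : l.Nodup)
    (hls : ∀ i ∈ l, i ∈ s) (hT : T ⊆ l.toFinset) (x : A) :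
    ∑ k ∈ T, P1 (e k) (compList (fun i => P0 (e i)) (l.filter (· ≠ k)) x)
      = (∑ k ∈ T, rangeProj (e k)) * x + x * ∑ k ∈ T, sourceProj (e k)
        - (∑ k ∈ T, rangeProj (e k)) * x * ∑ i ∈ l.toFinset, sourceProj (e i)
        - (∑ i ∈ l.toFinset, rangeProj (e i)) * x * ∑ k ∈ T, sourceProj (e k) := by
  rw [sum_congr rfl fun k hk =>
    P1_compList_P0_filter_ne horth htri hl hls (List.mem_toFinset.mp (hT hk)) x]
  simp only [sum_sub_distrib, sum_add_distrib, sum_mul, mul_sum]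
  rw [sum_comm (s := l.toFinset)]

theorem P1_P1_of_ne {i k : ℕ} (hi : i ∈ s) (hk : k ∈ s) (hik : i ≠ k) (x : A) :
    P1 (e i) (P1 (e k) x)
      = rangeProj (e i) * x * sourceProj (e k) + rangeProj (e k) * x * sourceProj (e i) := by
  have huu := (horth hi hk hik).rangeProj_mul
  have hvv : ∀ z, z * sourceProj (e k) * sourceProj (e i) = 0 := fun z => by
    rw [mul_assoc, (horth hk hi hik.symm).sourceProj_mul, mul_zero]
  rw [P1_eq_of_tripotent (htri k hk), P1_eq_of_tripotent (htri i hi)]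
  simp only [mul_add, add_mul, mul_sub, sub_mul, smul_sub, smul_add, mul_smul_comm,
    smul_mul_assoc, ← mul_assoc, huu, hvv, zero_mul, smul_zero]
  abel

theorem sum_sum_P1_P1_lt {T : Finset ℕ} (hT : ↑T ⊆ s) (x : A) :
    ∑ i ∈ T, ∑ k ∈ T with i < k, P1 (e i) (P1 (e k) x)
      = (∑ i ∈ T, rangeProj (e i)) * x * (∑ k ∈ T, sourceProj (e k))
        - ∑ i ∈ T, rangeProj (e i) * x * sourceProj (e i) := by
  rw [eq_sub_iff_add_eq, sum_mul, sum_mul_sum,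
    ← sum_sum_lt_add_sum_diag T fun i k => rangeProj (e i) * x * sourceProj (e k)]
  refine congrArg (· + _) (sum_congr rfl fun i hi => sum_congr rfl fun k hk => ?_)
  exact P1_P1_of_ne horth htri (hT hi) (hT (mem_filter.mp hk).1) (mem_filter.mp hk).2.ne x

end Family

theorem stmt9_general {A : Type*} [NonUnitalCStarAlgebra A] (r : ℕ) (e : ℕ → A)
    (htri : ∀ i ∈ Finset.Icc 1 r, e i * star (e i) * e i = e i)
    (horth : ∀ i ∈ Finset.Icc 1 r, ∀ j ∈ Finset.Icc 1 r, i ≠ j →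
      ∀ x : A, e i * star (e j) * x + x * star (e j) * e i = 0)
    (m : ℕ) (hm2 : 2 ≤ m) (hmr : m ≤ r) :
    ∀ x : A,
      compList (fun i => P0 (e i)) (List.range' 1 (m - 1)) x
        = compList (fun i => P0 (e i)) (List.range' 1 r) x
          + ∑ k ∈ Finset.Icc m r,
              P1 (e k) (compList (fun i => P0 (e i)) ((List.range' 1 r).filter (· ≠ k)) x)
          + ∑ i ∈ Finset.Icc m r, ∑ k ∈ Finset.Ioc i r, P1 (e i) (P1 (e k) x)
          + ∑ i ∈ Finset.Icc m r, P2 (e i) x := by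
  intro x
  have hperp : (↑(Icc 1 r) : Set ℕ).Pairwise fun i j => StarOrthogonal (e i) (e j) :=
    fun i hi j hj hij => starOrthogonal_of_box_eq_zero (htri i hi) (horth j hj i hi hij.symm)
  have hrange : ∀ n ≤ r, ∀ i ∈ List.range' 1 n, i ∈ (↑(Icc 1 r) : Set ℕ) := fun n hn i hi => by
    simp only [List.mem_range'_1] at hi; simp only [coe_Icc, Set.mem_Icc]; omega
  have hT : Icc m r ⊆ Icc 1 r := Icc_subset_Icc (by omega) le_rfl
  have hIoc : ∀ i ∈ Icc m r, Ioc i r = (Icc m r).filter (i < ·) := fun i hi => by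
    ext k; simp only [mem_Ioc, mem_filter, mem_Icc] at hi ⊢; omega
  have hsplit : Icc 1 r = Icc 1 (m - 1) ∪ Icc m r := by
    ext k; simp only [mem_union, mem_Icc]; omega
  have hdisj : Disjoint (Icc 1 (m - 1)) (Icc m r) := disjoint_left.mpr fun k hk hk' => by
    simp only [mem_Icc] at hk hk'; omega
  have hP1P1 : ∑ i ∈ Icc m r, ∑ k ∈ Ioc i r, P1 (e i) (P1 (e k) x)
      = (∑ i ∈ Icc m r, rangeProj (e i)) * x * (∑ k ∈ Icc m r, sourceProj (e k))
        - ∑ i ∈ Icc m r, rangeProj (e i) * x * sourceProj (e i) := by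
    rw [← sum_sum_P1_P1_lt hperp htri (coe_subset.mpr hT)]
    exact sum_congr rfl fun i hi => by rw [hIoc i hi]
  rw [compList_P0_eq hperp List.nodup_range' (hrange _ (by omega)),
    compList_P0_eq hperp List.nodup_range' (hrange r le_rfl),
    sum_P1_compList_P0_filter_ne hperp htri List.nodup_range' (hrange r le_rfl)
      (by rwa [List.toFinset_range'_1_1]),
    hP1P1, sum_congr rfl fun i hi => P2_eq_of_tripotent (htri i (hT hi)) x,
    List.toFinset_range'_1_1, List.toFinset_range'_1_1, hsplit, sum_union hdisj,
    sum_union hdisj]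
  noncomm_ring

/-- A piece of Lemma 3.1 (iii) (for C*-algebras): for mutually orthogonal tripotents
`e₁, …, e_r` and `2 ≤ m ≤ r`,
`∏_{i=1}^{m−1} P₀(e_i) = ∏_{i=1}^{r} P₀(e_i)
  + Σ_{k=m}^{r} P₁(e_k) ∘ ∏_{i ≤ r, i ≠ k} P₀(e_i)
  + Σ_{m ≤ i < k ≤ r} P₁(e_i) ∘ P₁(e_k) + Σ_{i=m}^{r} P₂(e_i)`. -/
theorem stmt9 {A : Type*} [NonUnitalCStarAlgebra A] (r : ℕ) (hr : 2 ≤ r) (e : ℕ → A)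
    (htri : ∀ i ∈ Finset.Icc 1 r, e i * star (e i) * e i = e i)
    (horth : ∀ i ∈ Finset.Icc 1 r, ∀ j ∈ Finset.Icc 1 r, i ≠ j →
      ∀ x : A, e i * star (e j) * x + x * star (e j) * e i = 0)
    (m : ℕ) (hm2 : 2 ≤ m) (hmr : m ≤ r) :
    ∀ x : A,
      compList (fun i => P0 (e i)) (List.range' 1 (m - 1)) x
        = compList (fun i => P0 (e i)) (List.range' 1 r) x
          + ∑ k ∈ Finset.Icc m r,
              P1 (e k) (compList (fun i => P0 (e i)) ((List.range' 1 r).filter (· ≠ k)) x)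
          + ∑ i ∈ Finset.Icc m r, ∑ k ∈ Finset.Ioc i r, P1 (e i) (P1 (e k) x)
          + ∑ i ∈ Finset.Icc m r, P2 (e i) x :=
  stmt9_general r e htri horth m hm2 hmr
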